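/- arXiv:1908.08473 — 5 statements merged into one kernel-verified Lean document; each statement's English description precedes it below -/
import Mathlib

section
/- Let f : (0,∞) → ℝ be a differentiable function and let ε = +1 or ε = −1. Define K(r) := cos f(r), V(r) := ε·sin f(r)/r, U(r) := ε·(r f'(r) − sin f(r))/r. Then for every r > 0 the three equations K'(r) + r V(r)(V(r)+U(r)) = 0, −K'(r) + (K(r)² − 1)/r − r V(r) U(r) = 0, and r V'(r) − U(r) − (K(r) − 1)(V(r) + U(r)) = 0 all hold. -/
/-! With `K = cos f`, `V = ε sin f / r` and `U = ε (r f' - sin f) / r`, the combination `V + U`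
collapses to `ε f'`. After that substitution the first two equations reduce to `ε² = 1` and
`sin² f + cos² f = 1`, and the third holds identically once `V'` is computed by the quotient
rule. -/

open Real Set

section Ansatz

variable {ε r f' : ℝ} (θ : ℝ)

lemma ansatz_V_add_U (hr : r ≠ 0) :
    ε * sin θ / r + ε * (r * f' - sin θ) / r = ε * f' := by
  field_simp
  ring

lemma ansatz_eq₁ (hε : ε ^ 2 = 1) (hr : r ≠ 0) :
    -sin θ * f' + r * (ε * sin θ / r) * (ε * sin θ / r + ε * (r * f' - sin θ) / r) = 0 := by
  rw [ansatz_V_add_U θ hr]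
  field_simp
  linear_combination sin θ * f' * hε

lemma ansatz_eq₂ (hε : ε ^ 2 = 1) (hr : r ≠ 0) :
    -(-sin θ * f') + (cos θ ^ 2 - 1) / r - r * (ε * sin θ / r) * (ε * (r * f' - sin θ) / r)
      = 0 := by
  field_simp
  linear_combination -(sin θ * (r * f' - sin θ)) * hε + sin_sq_add_cos_sq θ

lemma ansatz_eq₃ (hr : r ≠ 0) :
    r * ((ε * (cos θ * f') * r - ε * sin θ * 1) / r ^ 2) - ε * (r * f' - sin θ) / r
      - (cos θ - 1) * (ε * sin θ / r + ε * (r * f' - sin θ) / r) = 0 := by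
  rw [ansatz_V_add_U θ hr]
  field_simp
  ring

end Ansatz

/-- For `K := cos ∘ f`, `V := ε sin f / r`, `U := ε (r f' - sin f)/r`
with `ε = ±1`, the three spherically symmetric zero-curvature equations hold. -/
theorem stmt0 (f : ℝ → ℝ) (hf : ∀ r > 0, DifferentiableAt ℝ f r)
    (ε : ℝ) (hε : ε = 1 ∨ ε = -1)
    (K V U : ℝ → ℝ)
    (hK : ∀ r > 0, K r = Real.cos (f r))
    (hV : ∀ r > 0, V r = ε * Real.sin (f r) / r)
    (hU : ∀ r > 0, U r = ε * (r * deriv f r - Real.sin (f r)) / r) :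
    ∀ r > 0,
      deriv K r + r * V r * (V r + U r) = 0 ∧
      -deriv K r + (K r ^ 2 - 1) / r - r * V r * U r = 0 ∧
      r * deriv V r - U r - (K r - 1) * (V r + U r) = 0 := by
  intro r hr
  have hr0 : r ≠ 0 := hr.ne'
  have hε2 : ε ^ 2 = 1 := by rcases hε with rfl | rfl <;> norm_num
  have hf' := (hf r hr).hasDerivAt
  have hK' : deriv K r = -sin (f r) * deriv f r :=
    ((EqOn.eventuallyEq_of_mem (fun x hx => hK x hx) (Ioi_mem_nhds hr)).deriv_eq).trans
      hf'.cos.deriv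
  have hV' : deriv V r =
      (ε * (cos (f r) * deriv f r) * r - ε * sin (f r) * 1) / r ^ 2 :=
    ((EqOn.eventuallyEq_of_mem (fun x hx => hV x hx) (Ioi_mem_nhds hr)).deriv_eq).trans
      ((hf'.sin.const_mul ε).div (hasDerivAt_id r) hr0).deriv
  rw [hK', hV', hK r hr, hV r hr, hU r hr]
  exact ⟨ansatz_eq₁ _ hε2 hr0, ansatz_eq₂ _ hε2 hr0, ansatz_eq₃ _ hr0⟩
end

section
/- Let K, V, U : (0,∞) → ℝ be differentiable functions satisfying, for all r > 0, the three equations K' + r V(V+U) = 0, −K' + (K² − 1)/r − r V U = 0, and r V' − U − (K − 1)(V + U) = 0. Then there exists a differentiable function f : (0,∞) → ℝ such that for all r > 0: K(r) = cos f(r), V(r) = sin f(r)/r, and U(r) = (r f'(r) − sin f(r))/r. -/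
/-!
Adding the first two equations gives `K² + (rV)² = 1`, and the first and third say that the
point `(K, rV)` of the unit circle moves with angular velocity `U + V`:
`K' = -(rV)(U + V)` and `(rV)' = K (U + V)`. So `f` is an antiderivative of `U + V` starting
at the angle of `(K 1, V 1)`; the squared distance between `(K, rV)` and `(cos f, sin f)` then
has zero derivative and vanishes at `r = 1`, hence everywhere.
-/

open Real Set

theorem exists_cos_eq_and_sin_eq {x y : ℝ} (h : x ^ 2 + y ^ 2 = 1) :
    ∃ θ : ℝ, cos θ = x ∧ sin θ = y := by
  have hnorm : ‖(⟨x, y⟩ : ℂ)‖ = 1 := by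
    rw [Complex.norm_def, Complex.normSq_mk, ← Real.sqrt_one]
    congr 1
    linear_combination h
  obtain ⟨θ, hθ⟩ := (Complex.norm_eq_one_iff _).mp hnorm
  exact ⟨θ, by simpa using congr_arg Complex.re hθ, by simpa using congr_arg Complex.im hθ⟩

theorem hasDerivAt_integral_of_continuousOn {g : ℝ → ℝ} {s : Set ℝ} (hs : IsOpen s)
    (hs' : s.OrdConnected) (hg : ContinuousOn g s) {a x : ℝ} (ha : a ∈ s) (hx : x ∈ s) :
    HasDerivAt (fun x => ∫ t in a..x, g t) (g x) x :=
  intervalIntegral.integral_hasDerivAt_right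
    ((hg.mono (hs'.uIcc_subset ha hx)).intervalIntegrable)
    (hg.stronglyMeasurableAtFilter hs x hx) (hg.continuousAt (hs.mem_nhds hx))

theorem cos_eq_and_sin_eq_of_hasDerivAt {s : Set ℝ} (hs : IsOpen s) (hs' : IsPreconnected s)
    {x y θ ω : ℝ → ℝ} (hx : ∀ t ∈ s, HasDerivAt x (-(y t * ω t)) t)
    (hy : ∀ t ∈ s, HasDerivAt y (x t * ω t) t) (hθ : ∀ t ∈ s, HasDerivAt θ (ω t) t)
    {t₀ : ℝ} (ht₀ : t₀ ∈ s) (h₀ : x t₀ = cos (θ t₀) ∧ y t₀ = sin (θ t₀))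
    {t : ℝ} (ht : t ∈ s) : x t = cos (θ t) ∧ y t = sin (θ t) := by
  set D : ℝ → ℝ := fun t => (x t - cos (θ t)) ^ 2 + (y t - sin (θ t)) ^ 2
  have hD : ∀ t ∈ s, HasDerivAt D 0 t := fun t ht => by
    have := (((hx t ht).sub ((hθ t ht).cos)).pow 2).add (((hy t ht).sub ((hθ t ht).sin)).pow 2)
    exact this.congr_deriv (by simp only [Pi.sub_apply]; ring)
  have hDt : D t = D t₀ :=
    hs.is_const_of_deriv_eq_zero hs' (fun t ht => (hD t ht).differentiableAt.differentiableWithinAt)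
      (fun t ht => (hD t ht).deriv) ht ht₀
  have hDt_zero : (x t - cos (θ t)) ^ 2 + (y t - sin (θ t)) ^ 2 = 0 := by
    simpa [D, h₀.1, h₀.2] using hDt
  obtain ⟨hxt, hyt⟩ := (add_eq_zero_iff_of_nonneg (sq_nonneg _) (sq_nonneg _)).mp hDt_zero
  exact ⟨sub_eq_zero.mp (pow_eq_zero_iff two_ne_zero |>.mp hxt),
    sub_eq_zero.mp (pow_eq_zero_iff two_ne_zero |>.mp hyt)⟩

/-- Any differentiable solution `K, V, U` of the spherically symmetric
zero-curvature equations has the form `K = cos f`, `V = sin f / r`,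
`U = (r f' - sin f)/r` for some differentiable function `f`. -/
theorem stmt1 (K V U : ℝ → ℝ)
    (hK : ∀ r > 0, DifferentiableAt ℝ K r)
    (hV : ∀ r > 0, DifferentiableAt ℝ V r)
    (hU : ∀ r > 0, DifferentiableAt ℝ U r)
    (h1 : ∀ r > 0, deriv K r + r * V r * (V r + U r) = 0)
    (h2 : ∀ r > 0, -deriv K r + (K r ^ 2 - 1) / r - r * V r * U r = 0)
    (h3 : ∀ r > 0, r * deriv V r - U r - (K r - 1) * (V r + U r) = 0) :
    ∃ f : ℝ → ℝ, (∀ r > 0, DifferentiableAt ℝ f r) ∧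
      ∀ r > 0, K r = Real.cos (f r) ∧ V r = Real.sin (f r) / r ∧
        U r = (r * deriv f r - Real.sin (f r)) / r := by
  obtain ⟨θ₀, hcos₀, hsin₀⟩ := exists_cos_eq_and_sin_eq (x := K 1) (y := 1 * V 1)
    (by linear_combination h1 1 one_pos + h2 1 one_pos)
  have hcont : ContinuousOn (fun t => U t + V t) (Ioi 0) := fun t ht =>
    ((hU t ht).continuousAt.add (hV t ht).continuousAt).continuousWithinAt
  set f : ℝ → ℝ := fun r => θ₀ + ∫ t in (1 : ℝ)..r, (U t + V t)
  have hf : ∀ r ∈ Ioi (0 : ℝ), HasDerivAt f (U r + V r) r := fun r hr =>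
    (hasDerivAt_integral_of_continuousOn isOpen_Ioi ordConnected_Ioi hcont
      (mem_Ioi.mpr one_pos) hr).const_add θ₀
  have hKrot : ∀ r ∈ Ioi (0 : ℝ), HasDerivAt K (-(r * V r * (U r + V r))) r := fun r hr =>
    (hK r hr).hasDerivAt.congr_deriv (by linear_combination h1 r hr)
  have hrVrot : ∀ r ∈ Ioi (0 : ℝ), HasDerivAt (fun r => r * V r) (K r * (U r + V r)) r :=
    fun r hr => ((hasDerivAt_id' r).mul (hV r hr).hasDerivAt).congr_deriv
      (by linear_combination h3 r hr)
  refine ⟨f, fun r hr => (hf r hr).differentiableAt, fun r hr => ?_⟩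
  obtain ⟨hKr, hVr⟩ := cos_eq_and_sin_eq_of_hasDerivAt isOpen_Ioi isPreconnected_Ioi hKrot hrVrot
    hf (mem_Ioi.mpr one_pos) (by simp [f, hcos₀, hsin₀]) hr
  have hr0 : r ≠ 0 := hr.ne'
  rw [(hf r hr).deriv, ← hVr]
  exact ⟨hKr, by field_simp, by field_simp; ring⟩
end

section
/- Let W, V, U : (0,∞) → ℝ be differentiable functions and define A : ℝ³∖{0} → ℝ³⊗ℝ³ by A_μ{}^i(x) = ε_μ{}^{ij} (x_j/r) W(r) + δ_μ^i V(r) + (x_μ x^i/r²) U(r), where r = |x|. Then the curvature F_{μν}{}^i := ∂_μ A_ν{}^i − ∂_ν A_μ{}^i + Σ_{j,k} A_μ{}^j A_ν{}^k ε_{jki} satisfies, for all x ≠ 0: F_{μν}{}^i = ε_{μν}{}^i [W' + W/r + V(V+U)] + (ε_{μν}{}^j x_j x^i/r³)(W − rW' + rW² − rVU) + ((x_μ δ_ν^i − x_ν δ_μ^i)/r²)[rV' − U − rW(V+U)]. -/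
/-!
Write the ansatz as `A_{μi} = a(r) ε_{μij} x_j + b(r) δ_{μi} + c(r) x_μ x_i` with `a = W/r`, `b = V`,
`c = U/r²`. Since `∂_μ r = x_μ/r`, the derivative of each coefficient only contributes terms
proportional to `x_μ`, and after antisymmetrising in `μ, ν` the three-dimensional Schouten identity
turns `x_μ ε_{νij} x_j - x_ν ε_{μij} x_j` into `r² ε_{μνi} - x_i ε_{μνj} x_j`; in particular `c'`
drops out. The rows of `A` are `-a (e_μ × x) + b e_μ + c x_μ x`, and the quadratic term is the
cross product of two rows, which expands by the usual vector identities into the same three tensor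
structures. Collecting coefficients gives the formula.
-/

/-- The totally antisymmetric Levi-Civita symbol on three indices, `eps 0 1 2 = 1`. -/
noncomputable def eps (i j k : Fin 3) : ℝ :=
  ((j : ℝ) - (i : ℝ)) * ((k : ℝ) - (i : ℝ)) * ((k : ℝ) - (j : ℝ)) / 2

/-- The radius `r = |x|` of a point `x ∈ ℝ³`. -/
noncomputable def rad (x : Fin 3 → ℝ) : ℝ := Real.sqrt (∑ i, x i ^ 2)

/-- The partial derivative `∂_μ g` at `x`. -/
noncomputable def pd (g : (Fin 3 → ℝ) → ℝ) (μ : Fin 3) (x : Fin 3 → ℝ) : ℝ :=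
  fderiv ℝ g x (Pi.single μ 1)

section PartialDerivative

variable {f g : (Fin 3 → ℝ) → ℝ} {x : Fin 3 → ℝ}

lemma pd_congr (h : f =ᶠ[nhds x] g) (μ : Fin 3) : pd f μ x = pd g μ x := by
  rw [pd, h.fderiv_eq, pd]

lemma pd_add (hf : DifferentiableAt ℝ f x) (hg : DifferentiableAt ℝ g x) (μ : Fin 3) :
    pd (fun y => f y + g y) μ x = pd f μ x + pd g μ x := by
  simp [pd, fderiv_fun_add hf hg]

lemma pd_mul (hf : DifferentiableAt ℝ f x) (hg : DifferentiableAt ℝ g x) (μ : Fin 3) :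
    pd (fun y => f y * g y) μ x = pd f μ x * g x + f x * pd g μ x := by
  simp [pd, fderiv_fun_mul hf hg]
  ring

lemma pd_const_mul (c : ℝ) (hf : DifferentiableAt ℝ f x) (μ : Fin 3) :
    pd (fun y => c * f y) μ x = c * pd f μ x := by
  simp [pd, fderiv_const_mul hf]

lemma pd_sum {F : Fin 3 → (Fin 3 → ℝ) → ℝ} (hF : ∀ j, DifferentiableAt ℝ (F j) x) (μ : Fin 3) :
    pd (fun y => ∑ j, F j y) μ x = ∑ j, pd (F j) μ x := by
  simp [pd, fderiv_fun_sum fun j _ => hF j]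

lemma pd_comp {φ : ℝ → ℝ} (hφ : DifferentiableAt ℝ φ (f x)) (hf : DifferentiableAt ℝ f x)
    (μ : Fin 3) : pd (fun y => φ (f y)) μ x = deriv φ (f x) * pd f μ x := by
  have h := (hφ.hasDerivAt.comp_hasFDerivAt x hf.hasFDerivAt).fderiv
  simp only [Function.comp_def] at h
  simp [pd, h]

end PartialDerivative

lemma pd_apply (x : Fin 3 → ℝ) (j μ : Fin 3) :
    pd (fun y => y j) μ x = if μ = j then 1 else 0 := by
  simp [pd, (hasFDerivAt_apply j x).fderiv, Pi.single_apply, eq_comm]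

lemma sum_sq_pos {x : Fin 3 → ℝ} (hx : x ≠ 0) : 0 < ∑ i, x i ^ 2 := by
  obtain ⟨i, hi⟩ := Function.ne_iff.1 hx
  exact Finset.sum_pos' (fun j _ => sq_nonneg _) ⟨i, Finset.mem_univ i, sq_pos_of_ne_zero hi⟩

lemma rad_pos {x : Fin 3 → ℝ} (hx : x ≠ 0) : 0 < rad x := Real.sqrt_pos.2 (sum_sq_pos hx)

lemma rad_sq (x : Fin 3 → ℝ) : rad x ^ 2 = ∑ i, x i ^ 2 :=
  Real.sq_sqrt (Finset.sum_nonneg fun _ _ => sq_nonneg _)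

lemma differentiableAt_rad {x : Fin 3 → ℝ} (hx : x ≠ 0) : DifferentiableAt ℝ rad x := by
  unfold rad
  fun_prop (disch := exact (sum_sq_pos hx).ne')

lemma pd_sum_sq (x : Fin 3 → ℝ) (μ : Fin 3) : pd (fun y => ∑ i, y i ^ 2) μ x = 2 * x μ := by
  rw [pd_sum fun i => by fun_prop]
  simp [pd_comp (φ := (· ^ 2)) (differentiableAt_pow 2) (differentiableAt_apply _ x), pd_apply]

lemma pd_rad {x : Fin 3 → ℝ} (hx : x ≠ 0) (μ : Fin 3) : pd rad μ x = x μ / rad x := by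
  have hs := (sum_sq_pos hx).ne'
  have h := pd_comp (f := fun y => ∑ i, y i ^ 2) (x := x)
    (Real.hasDerivAt_sqrt hs).differentiableAt (by fun_prop) μ
  rw [(Real.hasDerivAt_sqrt hs).deriv, pd_sum_sq] at h
  rw [show rad = fun y => √(∑ i, y i ^ 2) from rfl, h]
  field_simp

lemma eps_schouten (x : Fin 3 → ℝ) (μ ν i : Fin 3) :
    x μ * ∑ j, eps ν i j * x j - x ν * ∑ j, eps μ i j * x j =
      (∑ j, x j ^ 2) * eps μ ν i - x i * ∑ j, eps μ ν j * x j := by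
  fin_cases μ <;> fin_cases ν <;> fin_cases i <;>
    simp only [eps, Fin.sum_univ_three, Fin.isValue, Fin.val_zero, Fin.val_one, Fin.val_two,
      Nat.cast_zero, Nat.cast_one, Nat.cast_ofNat, Fin.zero_eta, Fin.mk_one, Fin.reduceFinMk] <;>
    ring

noncomputable def sphericalAnsatz (a b c : ℝ) (x : Fin 3 → ℝ) (μ i : Fin 3) : ℝ :=
  a * ∑ j, eps μ i j * x j + (if μ = i then (1 : ℝ) else 0) * b + c * (x μ * x i)

section SphericalAnsatz

variable {f g h : ℝ → ℝ} {x : Fin 3 → ℝ}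

lemma pd_sphericalAnsatz (hx : x ≠ 0) (hf : DifferentiableAt ℝ f (rad x))
    (hg : DifferentiableAt ℝ g (rad x)) (hh : DifferentiableAt ℝ h (rad x)) (μ ν i : Fin 3) :
    pd (fun y => sphericalAnsatz (f (rad y)) (g (rad y)) (h (rad y)) y ν i) μ x =
      deriv f (rad x) * (x μ / rad x) * ∑ j, eps ν i j * x j + f (rad x) * eps ν i μ
        + (if ν = i then (1 : ℝ) else 0) * (deriv g (rad x) * (x μ / rad x))
        + deriv h (rad x) * (x μ / rad x) * (x ν * x i)
        + h (rad x) * ((if μ = ν then (1 : ℝ) else 0) * x i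
          + x ν * (if μ = i then (1 : ℝ) else 0)) := by
  have hr := differentiableAt_rad hx
  have hf' : DifferentiableAt ℝ (fun y => f (rad y)) x := hf.comp x hr
  have hg' : DifferentiableAt ℝ (fun y => g (rad y)) x := hg.comp x hr
  have hh' : DifferentiableAt ℝ (fun y => h (rad y)) x := hh.comp x hr
  unfold sphericalAnsatz
  rw [pd_add (by fun_prop) (by fun_prop), pd_add (by fun_prop) (by fun_prop),
    pd_mul hf' (by fun_prop), pd_const_mul _ hg', pd_mul hh' (by fun_prop),
    pd_mul (by fun_prop) (by fun_prop), pd_sum (fun j => by fun_prop),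
    pd_comp hf hr, pd_comp hg hr, pd_comp hh hr, pd_rad hx]
  simp only [pd_const_mul _ (differentiableAt_apply _ x), pd_apply, mul_ite, mul_one, mul_zero,
    Finset.sum_ite_eq, Finset.mem_univ, if_true]
  ring

lemma pd_sphericalAnsatz_sub (hx : x ≠ 0) (hf : DifferentiableAt ℝ f (rad x))
    (hg : DifferentiableAt ℝ g (rad x)) (hh : DifferentiableAt ℝ h (rad x)) (μ ν i : Fin 3) :
    pd (fun y => sphericalAnsatz (f (rad y)) (g (rad y)) (h (rad y)) y ν i) μ x -
        pd (fun y => sphericalAnsatz (f (rad y)) (g (rad y)) (h (rad y)) y μ i) ν x =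
      deriv f (rad x) / rad x * ((∑ j, x j ^ 2) * eps μ ν i - x i * ∑ j, eps μ ν j * x j)
        + 2 * f (rad x) * eps μ ν i
        + (deriv g (rad x) / rad x - h (rad x)) *
          (x μ * (if ν = i then (1 : ℝ) else 0) - x ν * (if μ = i then (1 : ℝ) else 0)) := by
  have hε : eps ν i μ - eps μ i ν = 2 * eps μ ν i := by unfold eps; ring
  have hδ : (if ν = μ then (1 : ℝ) else 0) = if μ = ν then 1 else 0 := by simp only [eq_comm]
  rw [pd_sphericalAnsatz hx hf hg hh, pd_sphericalAnsatz hx hf hg hh, hδ]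
  linear_combination deriv f (rad x) / rad x * eps_schouten x μ ν i + f (rad x) * hε

end SphericalAnsatz

lemma sum_sphericalAnsatz_mul_eps (a b c : ℝ) (x : Fin 3 → ℝ) (μ ν i : Fin 3) :
    ∑ j, ∑ k, sphericalAnsatz a b c x μ j * sphericalAnsatz a b c x ν k * eps j k i =
      (b ^ 2 + b * c * ∑ j, x j ^ 2) * eps μ ν i
        + (a ^ 2 - b * c) * x i * ∑ j, eps μ ν j * x j
        + a * (b + c * ∑ j, x j ^ 2) *
          (x ν * (if μ = i then (1 : ℝ) else 0) - x μ * (if ν = i then (1 : ℝ) else 0)) := by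
  fin_cases μ <;> fin_cases ν <;> fin_cases i <;>
    simp only [sphericalAnsatz, eps, Fin.sum_univ_three, Fin.isValue, Fin.val_zero, Fin.val_one,
      Fin.val_two, Nat.cast_zero, Nat.cast_one, Nat.cast_ofNat, Fin.zero_eta, Fin.mk_one,
      Fin.reduceFinMk, Fin.reduceEq, if_true, if_false] <;>
    ring

/-- the curvature of the spherically symmetric ansatz
`A_μ{}^i = ε_μ{}^{ij} (x_j/r) W + δ_μ^i V + (x_μ x^i/r²) U` is given by (7) of the paper. -/
theorem stmt3 (W V U : ℝ → ℝ)
    (hW : ∀ r > 0, DifferentiableAt ℝ W r)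
    (hV : ∀ r > 0, DifferentiableAt ℝ V r)
    (hU : ∀ r > 0, DifferentiableAt ℝ U r)
    (A : (Fin 3 → ℝ) → Fin 3 → Fin 3 → ℝ)
    (hA : ∀ x, x ≠ 0 → ∀ μ i, A x μ i =
      (∑ j, eps μ i j * x j / rad x) * W (rad x) +
      (if μ = i then (1 : ℝ) else 0) * V (rad x) +
      x μ * x i / rad x ^ 2 * U (rad x)) :
    ∀ x, x ≠ 0 → ∀ μ ν i,
      pd (fun y => A y ν i) μ x - pd (fun y => A y μ i) ν x +
        ∑ j, ∑ k, A x μ j * A x ν k * eps j k i =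
      eps μ ν i *
        (deriv W (rad x) + W (rad x) / rad x + V (rad x) * (V (rad x) + U (rad x))) +
      (∑ j, eps μ ν j * x j) * x i / rad x ^ 3 *
        (W (rad x) - rad x * deriv W (rad x) + rad x * W (rad x) ^ 2 -
          rad x * V (rad x) * U (rad x)) +
      (x μ * (if ν = i then (1 : ℝ) else 0) - x ν * (if μ = i then (1 : ℝ) else 0)) /
          rad x ^ 2 *
        (rad x * deriv V (rad x) - U (rad x) - rad x * W (rad x) * (V (rad x) + U (rad x))) := by
  intro x hx μ ν i
  have hA_ansatz : ∀ y, y ≠ 0 → ∀ μ i, A y μ i =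
      sphericalAnsatz (W (rad y) / rad y) (V (rad y)) (U (rad y) / rad y ^ 2) y μ i := by
    intro y hy μ i
    rw [hA y hy, sphericalAnsatz, ← Finset.sum_div]
    ring
  have hpd : ∀ μ ν, pd (fun y => A y ν i) μ x = pd (fun y =>
      sphericalAnsatz (W (rad y) / rad y) (V (rad y)) (U (rad y) / rad y ^ 2) y ν i) μ x :=
    fun μ ν => pd_congr
      (Filter.eventually_of_mem (isOpen_ne.mem_nhds hx) fun y hy => hA_ansatz y hy ν i) μ
  have hr := rad_pos hx
  have hWr : DifferentiableAt ℝ (fun t => W t / t) (rad x) :=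
    (hW _ hr).div differentiableAt_id hr.ne'
  have hUr : DifferentiableAt ℝ (fun t => U t / t ^ 2) (rad x) :=
    (hU _ hr).div (differentiableAt_pow 2) (by positivity)
  have hdW : deriv (fun t => W t / t) (rad x) =
      (deriv W (rad x) * rad x - W (rad x)) / rad x ^ 2 := by
    rw [deriv_fun_div (hW _ hr) differentiableAt_fun_id hr.ne']
    simp
  rw [hpd, hpd, pd_sphericalAnsatz_sub hx hWr (hV _ hr) hUr]
  simp only [hA_ansatz x hx]
  rw [sum_sphericalAnsatz_mul_eps, ← rad_sq, hdW]
  field_simp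
  ring
end

section
/- Let f : [0,∞) → ℝ be continuous and define n : ℝ³∖{0} → ℝ³ by n₁ = −(x₂/r) sin f(r) + (x₁x₃/r²)(1 − cos f(r)), n₂ = (x₁/r) sin f(r) + (x₂x₃/r²)(1 − cos f(r)), n₃ = cos f(r) + (x₃²/r²)(1 − cos f(r)), where r = |x|. Then n extends to a continuous map on all of ℝ³ (equivalently, the limit of n(x) as x → 0 exists and is independent of the direction of approach) if and only if f(0) ∈ 2πℤ; and in that case the limit equals (0,0,1). -/
/-!
For `x ≠ 0`, `n x = rodrigues (f r) (x / r)` is the image of `e₃ = (0,0,1)` under the rotation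
by angle `-f(r)` about the axis `x / r`. Since
`rodrigues θ u - e₃ = sin θ (e₃ × u) + (1 - cos θ)(u₃ u - e₃)` with coefficients bounded on the
unit ball, `n → e₃` as soon as `cos f(0) = 1`. Conversely, along the ray through a unit vector
`u` the field tends to `rodrigues (f 0) u`; the rays along `e₃` and `e₁` give the limits `e₃`
and `(0, sin f(0), cos f(0))`, which agree only if `cos f(0) = 1`.
-/

open Filter Topology Real Set Matrix

local notation "e₃" => ![(0 : ℝ), 0, 1]

/-- Rodrigues' formula for the rotation of `e₃` by angle `-θ` about the unit axis `u`. -/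
noncomputable def rodrigues (θ : ℝ) (u : Fin 3 → ℝ) : Fin 3 → ℝ :=
  cos θ • e₃ + sin θ • (e₃ ⨯₃ u) + (1 - cos θ) • (u 2 • u)

lemma rad_eq_norm_toLp (x : Fin 3 → ℝ) : rad x = ‖WithLp.toLp 2 x‖ := by
  simp [rad, EuclideanSpace.norm_eq]

@[simp]
lemma rad_zero : rad 0 = 0 := by simp [rad]

lemma rad_nonneg (x : Fin 3 → ℝ) : 0 ≤ rad x := Real.sqrt_nonneg _

lemma rad_smul (t : ℝ) (x : Fin 3 → ℝ) : rad (t • x) = |t| * rad x := by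
  rw [rad_eq_norm_toLp, rad_eq_norm_toLp, WithLp.toLp_smul, norm_smul, Real.norm_eq_abs]

lemma continuous_rad : Continuous rad := by
  simp_rw [funext rad_eq_norm_toLp]
  exact (PiLp.continuous_toLp 2 _).norm

lemma norm_le_rad (x : Fin 3 → ℝ) : ‖x‖ ≤ rad x := by
  rw [pi_norm_le_iff_of_nonneg (rad_nonneg x), rad_eq_norm_toLp]
  exact fun i => PiLp.norm_apply_le (WithLp.toLp 2 x) i

lemma norm_inv_rad_smul_le_one (x : Fin 3 → ℝ) : ‖(rad x)⁻¹ • x‖ ≤ 1 := by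
  rw [norm_smul, norm_inv, Real.norm_of_nonneg (rad_nonneg x)]
  exact inv_mul_le_one_of_le₀ (norm_le_rad x) (rad_nonneg x)

lemma tendsto_rad_nhdsWithin_Ici : Tendsto rad (𝓝 0) (𝓝[Ici 0] 0) :=
  tendsto_nhdsWithin_iff.2
    ⟨continuous_rad.tendsto' 0 0 rad_zero, Eventually.of_forall rad_nonneg⟩

lemma continuous_rodrigues_left (u : Fin 3 → ℝ) : Continuous fun θ => rodrigues θ u := by
  unfold rodrigues
  fun_prop

lemma rodrigues_sub_e3 (θ : ℝ) (u : Fin 3 → ℝ) :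
    rodrigues θ u - e₃ = sin θ • (e₃ ⨯₃ u) + (1 - cos θ) • (u 2 • u - e₃) := by
  simp only [rodrigues, smul_sub, sub_smul, one_smul]
  abel

lemma norm_e3_cross_le (u : Fin 3 → ℝ) : ‖e₃ ⨯₃ u‖ ≤ ‖u‖ := by
  rw [pi_norm_le_iff_of_nonneg (norm_nonneg u)]
  intro i
  fin_cases i <;> simp [cross_apply, -Real.norm_eq_abs, norm_le_pi_norm]

lemma norm_smul_sub_e3_le {u : Fin 3 → ℝ} (hu : ‖u‖ ≤ 1) : ‖u 2 • u - e₃‖ ≤ 2 := by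
  have he₃ : ‖e₃‖ ≤ 1 := by
    rw [pi_norm_le_iff_of_nonneg zero_le_one]
    intro i
    fin_cases i <;> simp
  calc ‖u 2 • u - e₃‖ ≤ ‖u 2‖ * ‖u‖ + ‖e₃‖ := by
        grw [norm_sub_le, norm_smul]
    _ ≤ 1 * 1 + 1 := by
        gcongr
        exact (norm_le_pi_norm u 2).trans hu
    _ = 2 := by norm_num

lemma tendsto_rodrigues_of_cos_eq_one {α : Type*} {l : Filter α} {θ : α → ℝ}
    {u : α → Fin 3 → ℝ} {θ₀ : ℝ}
    (hθ : Tendsto θ l (𝓝 θ₀)) (hθ₀ : cos θ₀ = 1) (hu : ∀ a, ‖u a‖ ≤ 1) :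
    Tendsto (fun a => rodrigues (θ a) (u a)) l (𝓝 e₃) := by
  have hsin : Tendsto (fun a => sin (θ a)) l (𝓝 0) := by
    simpa only [Function.comp_def, sin_eq_zero_iff_cos_eq.2 (Or.inl hθ₀)] using
      (continuous_sin.tendsto θ₀).comp hθ
  have hcos : Tendsto (fun a => 1 - cos (θ a)) l (𝓝 0) := by
    simpa [hθ₀] using ((continuous_cos.tendsto θ₀).comp hθ).const_sub 1
  have hsmall : Tendsto (fun a => rodrigues (θ a) (u a) - e₃) l (𝓝 0) := by
    simp_rw [rodrigues_sub_e3]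
    simpa using (hsin.zero_smul_isBoundedUnder_le
        (isBoundedUnder_of ⟨1, fun a => (norm_e3_cross_le (u a)).trans (hu a)⟩)).add
      (hcos.zero_smul_isBoundedUnder_le
        (isBoundedUnder_of ⟨2, fun a => norm_smul_sub_e3_le (hu a)⟩))
  simpa only [sub_add_cancel, zero_add] using hsmall.add_const e₃

lemma rodrigues_e3 (θ : ℝ) : rodrigues θ e₃ = e₃ := by
  ext i
  fin_cases i <;> simp [rodrigues]

lemma rodrigues_e1_two (θ : ℝ) : rodrigues θ ![1, 0, 0] 2 = cos θ := by
  simp [rodrigues, cross_apply]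

lemma tendsto_smul_nhdsGT_zero {E : Type*} [NormedAddCommGroup E] [NormedSpace ℝ E]
    {u : E} (hu : u ≠ 0) : Tendsto (fun t : ℝ => t • u) (𝓝[>] 0) (𝓝[≠] 0) := by
  refine tendsto_nhdsWithin_iff.2 ⟨?_, ?_⟩
  · exact ((continuous_id.smul continuous_const).tendsto' 0 0 (zero_smul ℝ u)).mono_left
      nhdsWithin_le_nhds
  · filter_upwards [self_mem_nhdsWithin] with t ht using smul_ne_zero (ne_of_gt ht) hu

lemma eq_rodrigues_of_tendsto {f : ℝ → ℝ} (hf : ContinuousWithinAt f (Ici 0) 0)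
    {n : (Fin 3 → ℝ) → Fin 3 → ℝ}
    (hrod : ∀ x, x ≠ 0 → n x = rodrigues (f (rad x)) ((rad x)⁻¹ • x))
    {L : Fin 3 → ℝ} (hL : Tendsto n (𝓝[≠] 0) (𝓝 L)) {u : Fin 3 → ℝ} (hu : rad u = 1) :
    L = rodrigues (f 0) u := by
  have hu0 : u ≠ 0 := by rintro rfl; simp at hu
  have hray : ∀ᶠ t in 𝓝[>] (0 : ℝ), n (t • u) = rodrigues (f t) u := by
    filter_upwards [self_mem_nhdsWithin] with t (ht : 0 < t)
    rw [hrod _ (smul_ne_zero ht.ne' hu0), rad_smul, hu, abs_of_pos ht, mul_one,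
      inv_smul_smul₀ ht.ne']
  have hlim : Tendsto (fun t => rodrigues (f t) u) (𝓝[>] 0) (𝓝 (rodrigues (f 0) u)) :=
    (continuous_rodrigues_left u).continuousAt.tendsto.comp
      ((hf.mono Ioi_subset_Ici_self).tendsto)
  exact tendsto_nhds_unique ((hL.comp (tendsto_smul_nhdsGT_zero hu0)).congr' hray) hlim

/-- the disclination field `n` (built from `f` and the boundary vector
`n₀ = (0,0,1)`) has a direction-independent limit at the origin — equivalently, it
extends continuously to all of `ℝ³` — if and only if `f 0 ∈ 2πℤ`, and in that case the
limit is `(0,0,1)`.  (The coordinates `x₁, x₂, x₃` are `x 0, x 1, x 2`.) -/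
theorem stmt12 (f : ℝ → ℝ) (hf : ContinuousOn f (Set.Ici 0))
    (n : (Fin 3 → ℝ) → Fin 3 → ℝ)
    (hn : ∀ x : Fin 3 → ℝ, x ≠ 0 →
      n x 0 = -(x 1 / rad x) * Real.sin (f (rad x)) +
        x 0 * x 2 / rad x ^ 2 * (1 - Real.cos (f (rad x))) ∧
      n x 1 = x 0 / rad x * Real.sin (f (rad x)) +
        x 1 * x 2 / rad x ^ 2 * (1 - Real.cos (f (rad x))) ∧
      n x 2 = Real.cos (f (rad x)) +
        x 2 ^ 2 / rad x ^ 2 * (1 - Real.cos (f (rad x)))) :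
    ((∃ L : Fin 3 → ℝ,
        Filter.Tendsto n (nhdsWithin 0 {(0 : Fin 3 → ℝ)}ᶜ) (nhds L)) ↔
      ∃ k : ℤ, f 0 = 2 * Real.pi * (k : ℝ)) ∧
    ((∃ k : ℤ, f 0 = 2 * Real.pi * (k : ℝ)) →
      Filter.Tendsto n (nhdsWithin 0 {(0 : Fin 3 → ℝ)}ᶜ)
        (nhds fun i => if i = 2 then (1 : ℝ) else 0)) := by
  have hrod : ∀ x, x ≠ 0 → n x = rodrigues (f (rad x)) ((rad x)⁻¹ • x) := by
    intro x hx
    obtain ⟨h0, h1, h2⟩ := hn x hx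
    ext i
    fin_cases i <;> simp [rodrigues, cross_apply, h0, h1, h2] <;> ring
  have hf0 : ContinuousWithinAt f (Ici 0) 0 := hf 0 self_mem_Ici
  have hpole : (fun i : Fin 3 => if i = 2 then (1 : ℝ) else 0) = e₃ := by
    ext i
    fin_cases i <;> rfl
  have hif : (∃ k : ℤ, f 0 = 2 * π * k) →
      Tendsto n (𝓝[≠] 0) (𝓝 fun i => if i = 2 then (1 : ℝ) else 0) := by
    rintro ⟨k, hk⟩
    rw [hpole]
    have hθ : Tendsto (fun x => f (rad x)) (𝓝[≠] 0) (𝓝 (f 0)) :=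
      hf0.tendsto.comp (tendsto_rad_nhdsWithin_Ici.mono_left nhdsWithin_le_nhds)
    refine (tendsto_rodrigues_of_cos_eq_one hθ ?_ norm_inv_rad_smul_le_one).congr' ?_
    · exact (cos_eq_one_iff _).2 ⟨k, by rw [hk]; ring⟩
    · filter_upwards [self_mem_nhdsWithin] with x hx using (hrod x hx).symm
  refine ⟨⟨fun ⟨L, hL⟩ => ?_, fun h => ⟨_, hif h⟩⟩, hif⟩
  have hcos : cos (f 0) = 1 := by
    have hL₃ := eq_rodrigues_of_tendsto hf0 hrod hL (u := e₃) (by simp [rad, Fin.sum_univ_three])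
    have hL₁ := eq_rodrigues_of_tendsto hf0 hrod hL (u := ![1, 0, 0])
      (by simp [rad, Fin.sum_univ_three])
    rw [← rodrigues_e1_two, ← hL₁, hL₃, rodrigues_e3]
    rfl
  obtain ⟨k, hk⟩ := (cos_eq_one_iff _).1 hcos
  exact ⟨k, by rw [← hk]; ring⟩
end

section
/- Let f : (0,∞) → ℝ be differentiable, let A be the general spherically symmetric flat SO(3)-connection determined by f, and fix x ∈ ℝ³∖{0}. For s > 0 define the 3×3 matrix M(s) with entries M(s)_i{}^j := Σ_{μ,k} x^μ A_μ{}^k(sx) ε_{ki}{}^j, i.e. the contraction of the connection along the ray through x. Then the matrices M(s) for different parameter values commute: M(s) M(t) = M(t) M(s) for all s, t > 0; consequently the path-ordered exponential along the ray coincides with the ordinary matrix exponential. -/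
/-- The general spherically symmetric flat SO(3)-connection determined by `f`:
`A_μ{}^i = ε_{μij} x_j (cos f - 1)/r² + δ_μ^i sin f / r + x_μ x^i (r f' - sin f)/r³`. -/
noncomputable def Aconn (f : ℝ → ℝ) (x : Fin 3 → ℝ) (μ i : Fin 3) : ℝ :=
  (∑ j, eps μ i j * x j) * (Real.cos (f (rad x)) - 1) / rad x ^ 2 +
  (if μ = i then (1 : ℝ) else 0) * Real.sin (f (rad x)) / rad x +
  x μ * x i * (rad x * deriv f (rad x) - Real.sin (f (rad x))) / rad x ^ 3

lemma rad_eq_zero_iff {x : Fin 3 → ℝ} : rad x = 0 ↔ x = 0 := by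
  rw [← sq_eq_zero_iff, rad_sq, Finset.sum_eq_zero_iff_of_nonneg fun _ _ => sq_nonneg _,
    funext_iff]
  simp

lemma sum_mul_sum_eps_mul_self (x : Fin 3 → ℝ) (k : Fin 3) :
    ∑ μ, x μ * ∑ j, eps μ k j * x j = 0 := by
  fin_cases k <;> simp [Fin.sum_univ_three, eps] <;> ring

lemma mul_Aconn (f : ℝ → ℝ) (x : Fin 3 → ℝ) (μ k : Fin 3) :
    x μ * Aconn f x μ k =
      x μ * (∑ j, eps μ k j * x j) * (Real.cos (f (rad x)) - 1) / rad x ^ 2 +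
      (if μ = k then x k else 0) * Real.sin (f (rad x)) / rad x +
      x μ ^ 2 * (x k * (rad x * deriv f (rad x) - Real.sin (f (rad x))) / rad x ^ 3) := by
  simp only [Aconn]
  split_ifs with h
  · subst h; ring
  · ring

lemma sum_mul_Aconn (f : ℝ → ℝ) (x : Fin 3 → ℝ) (k : Fin 3) :
    ∑ μ, x μ * Aconn f x μ k = x k * deriv f (rad x) := by
  rcases eq_or_ne x 0 with rfl | hx
  · simp
  have hr : rad x ≠ 0 := mt rad_eq_zero_iff.mp hx
  simp only [mul_Aconn, Finset.sum_add_distrib, ← Finset.sum_div, ← Finset.sum_mul,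
    Finset.sum_ite_eq', Finset.mem_univ, if_true, sum_mul_sum_eps_mul_self, ← rad_sq]
  field_simp
  ring

lemma sum_mul_Aconn_smul (f : ℝ → ℝ) (x : Fin 3 → ℝ) {s : ℝ} (hs : s ≠ 0) (k : Fin 3) :
    ∑ μ, x μ * Aconn f (s • x) μ k = x k * deriv f (rad (s • x)) := by
  have h := sum_mul_Aconn f (s • x) k
  simp only [Pi.smul_apply, smul_eq_mul, mul_assoc, ← Finset.mul_sum] at h
  exact mul_left_cancel₀ hs h

noncomputable def epsMatrix (x : Fin 3 → ℝ) : Matrix (Fin 3) (Fin 3) ℝ :=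
  Matrix.of fun i j => ∑ k, x k * eps k i j

lemma of_sum_mul_Aconn_smul_mul_eps (f : ℝ → ℝ) (x : Fin 3 → ℝ) {s : ℝ} (hs : s ≠ 0) :
    Matrix.of (fun i j => ∑ μ, ∑ k, x μ * Aconn f (s • x) μ k * eps k i j) =
      deriv f (rad (s • x)) • epsMatrix x := by
  ext i j
  simp only [Matrix.of_apply, Matrix.smul_apply, epsMatrix, smul_eq_mul, Finset.mul_sum]
  rw [Finset.sum_comm]
  refine Finset.sum_congr rfl fun k _ => ?_
  rw [← Finset.sum_mul, sum_mul_Aconn_smul f x hs k]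
  ring

theorem stmt15_general (f : ℝ → ℝ)
    (x : Fin 3 → ℝ)
    (M : ℝ → Matrix (Fin 3) (Fin 3) ℝ)
    (hM : ∀ s > 0, ∀ i j, M s i j = ∑ μ, ∑ k, x μ * Aconn f (s • x) μ k * eps k i j) :
    ∀ s > 0, ∀ t > 0, M s * M t = M t * M s := by
  have hM_smul : ∀ s > 0, M s = deriv f (rad (s • x)) • epsMatrix x := fun s hs => by
    rw [← of_sum_mul_Aconn_smul_mul_eps f x hs.ne']
    exact Matrix.ext (hM s hs)
  intro s hs t ht
  rw [hM_smul s hs, hM_smul t ht]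
  exact (((Commute.refl _).smul_left _).smul_right _).eq

/-- the matrices `M(s)_i{}^j = x^μ A_μ{}^k(sx) ε_{ki}{}^j`, obtained by
contracting the spherically symmetric flat connection along the ray through `x`,
commute with one another: `M(s) M(t) = M(t) M(s)` for all `s, t > 0`. -/
theorem stmt15 (f : ℝ → ℝ) (hf : ∀ r > 0, DifferentiableAt ℝ f r)
    (x : Fin 3 → ℝ) (hx : x ≠ 0)
    (M : ℝ → Matrix (Fin 3) (Fin 3) ℝ)
    (hM : ∀ s > 0, ∀ i j, M s i j = ∑ μ, ∑ k, x μ * Aconn f (s • x) μ k * eps k i j) :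
    ∀ s > 0, ∀ t > 0, M s * M t = M t * M s :=
  stmt15_general f x M hM
end
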